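/- Let g be a left Leibniz algebra over ℝ (or over a field of characteristic zero, with g nilpotent so that exponentials are finite sums, or g finite-dimensional over ℝ so that exp converges). Define the operation X ▷ Y = exp(ad X)(Y), where ad(X)(Y) = [X,Y]. Then ▷ satisfies the self-distributivity law X ▷ (Y ▷ Z) = (X ▷ Y) ▷ (X ▷ Z). -/

import Mathlib

/-! If `D` is a derivation of a continuous bilinear map `B`, then `t ↦ B (exp (tD) y) (exp (tD) z)`
and `t ↦ exp (tD) (B y z)` solve the same linear ODE `w' = D w` with the same initial value, so
`exp D` is an automorphism of `B`. For `D = ad X` this says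
`exp (ad X) ∘ ad Y = ad (exp (ad X) Y) ∘ exp (ad X)`, and exponentiating this intertwining relation
turns it into `exp (ad X) ∘ exp (ad Y) = exp (ad (exp (ad X) Y)) ∘ exp (ad X)`, which is the
self-distributivity law evaluated at `Z`. -/

open NormedSpace

section Derivation

variable {L : Type*} [NormedAddCommGroup L] [NormedSpace ℝ L] [CompleteSpace L]

theorem hasDerivAt_exp_smul_apply (D : L →L[ℝ] L) (y : L) (t : ℝ) :
    HasDerivAt (fun s : ℝ => exp (s • D) y) (D (exp (t • D) y)) t := by
  simpa using (hasDerivAt_exp_smul_const' D t).clm_apply (hasDerivAt_const t y)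

theorem eq_exp_smul_apply_of_hasDerivAt {D : L →L[ℝ] L} {w : ℝ → L}
    (hw : ∀ t, HasDerivAt w (D (w t)) t) (t : ℝ) : w t = exp (t • D) (w 0) := by
  -- the algebraic properties of `exp` are stated for `ℚ`-algebras
  let := NormedAlgebra.restrictScalars ℚ ℝ (L →L[ℝ] L)
  have hderiv : ∀ s, HasDerivAt (fun s => exp (s • -D) (w s)) 0 s := fun s => by
    simpa using (hasDerivAt_exp_smul_const (-D) s).clm_apply (hw s)
  have hconst : exp (t • -D) (w t) = w 0 := by
    simpa using is_const_of_deriv_eq_zero (fun s => (hderiv s).differentiableAt)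
      (fun s => (hderiv s).deriv) t 0
  calc w t = exp (t • D + t • -D) (w t) := by simp
    _ = exp (t • D) (exp (t • -D) (w t)) := by
      rw [exp_add_of_commute ((Commute.refl D).neg_right.smul_left t |>.smul_right t)]; rfl
    _ = exp (t • D) (w 0) := by rw [hconst]

theorem exp_apply_bilinear_of_derivation (B : L →L[ℝ] L →L[ℝ] L) {D : L →L[ℝ] L}
    (hD : ∀ y z, D (B y z) = B (D y) z + B y (D z)) (y z : L) :
    exp D (B y z) = B (exp D y) (exp D z) := by
  have hw : ∀ t, HasDerivAt (fun t => B (exp (t • D) y) (exp (t • D) z))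
      (D (B (exp (t • D) y) (exp (t • D) z))) t := fun t => by
    rw [hD, add_comm]
    exact B.hasDerivAt_of_bilinear (fun _ => hasDerivAt_exp_smul_apply D y t)
      (fun _ => hasDerivAt_exp_smul_apply D z t)
  simpa using (eq_exp_smul_apply_of_hasDerivAt hw 1).symm

theorem semiconjBy_exp_of_derivation (B : L →L[ℝ] L →L[ℝ] L) {D : L →L[ℝ] L}
    (hD : ∀ y z, D (B y z) = B (D y) z + B y (D z)) (y : L) :
    SemiconjBy (exp D) (exp (B y)) (exp (B (exp D y))) := by
  let := NormedAlgebra.restrictScalars ℚ ℝ (L →L[ℝ] L)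
  have hconj : SemiconjBy (exp D) (B y) (B (exp D y)) :=
    ContinuousLinearMap.ext (exp_apply_bilinear_of_derivation B hD y)
  exact hconj.exp_right

end Derivation

/-- For a finite-dimensional real left Leibniz algebra, the operation
`X ▷ Y = exp(ad X)(Y)` satisfies left self-distributivity. -/
theorem leibniz_exp_self_distrib (L : Type*) [NormedAddCommGroup L]
    [NormedSpace ℝ L] [FiniteDimensional ℝ L]
    (br : L →ₗ[ℝ] L →ₗ[ℝ] L)
    (hleib : ∀ a b c : L, br a (br b c) = br (br a b) c + br b (br a c)) :
    ∀ X Y Z : L,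
      (fun X Y : L => exp ((LinearMap.toContinuousLinearMap (br X) : L →L[ℝ] L)) Y)
        X ((fun X Y : L => exp ((LinearMap.toContinuousLinearMap (br X) : L →L[ℝ] L)) Y) Y Z) =
      (fun X Y : L => exp ((LinearMap.toContinuousLinearMap (br X) : L →L[ℝ] L)) Y)
        ((fun X Y : L => exp ((LinearMap.toContinuousLinearMap (br X) : L →L[ℝ] L)) Y) X Y)
        ((fun X Y : L => exp ((LinearMap.toContinuousLinearMap (br X) : L →L[ℝ] L)) Y) X Z) := by
  intro X Y Z
  have hconj := semiconjBy_exp_of_derivation br.toContinuousBilinearMap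
    (D := br.toContinuousBilinearMap X) (hleib X) Y
  exact congrArg (· Z) hconj.eq
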